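/- For arbitrary sequences of real numbers $(A_\ell)_{\ell\ge0}$ and $(B_k)_{k\ge0}$ and any natural number $\nu$, one has $\sum_{m=0}^{\nu} \sum_{\ell=0}^{m} \sum_{k=0}^{\nu-m} \binom{\nu}{m} A_{\ell} B_{k}\, S(m,\ell)\, S(\nu-m,k) = \sum_{m=0}^{\nu} \Big( \sum_{\ell=0}^{m} \binom{m}{\ell} A_\ell B_{m-\ell} \Big) S(\nu,m)$. -/

import Mathlib

/-!
The heart of the matter is the Vandermonde-type convolution
`∑ₘ C(ν,m) S(m,ℓ) S(ν-m,k) = C(ℓ+k,ℓ) S(ν,ℓ+k)`: splitting a `ν`-set into `ℓ+k` blocks and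
choosing `ℓ` of them is the same as first choosing the union `M` of those `ℓ` blocks and then
partitioning `M` and its complement. It follows by induction on `ν` from Pascal's rule and the
recurrence of `S`. Summing the triple sum over `m` first therefore leaves
`∑_{ℓ,k} A_ℓ B_k C(ℓ+k,ℓ) S(ν,ℓ+k)`, and grouping the terms by `ℓ + k` gives the right-hand side.
-/

/-- Stirling numbers of the second kind. -/
def stirling2 : ℕ → ℕ → ℕ
  | 0, 0 => 1
  | 0, _ + 1 => 0
  | _ + 1, 0 => 0
  | n + 1, k + 1 => (k + 1) * stirling2 n (k + 1) + stirling2 n k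

open Finset

theorem stirling2_eq_stirlingSecond : stirling2 = Nat.stirlingSecond := by
  funext n k
  induction n generalizing k with
  | zero => cases k <;> rfl
  | succ n ih => cases k <;> simp [stirling2, Nat.stirlingSecond_succ_succ, ih]

theorem Finset.sum_range_eq_sum_range_of_eq_zero {M : Type*} [AddCommMonoid M] {f : ℕ → M}
    {m n : ℕ} (hmn : m ≤ n) (hf : ∀ i, m ≤ i → i < n → f i = 0) :
    ∑ i ∈ range m, f i = ∑ i ∈ range n, f i :=
  sum_subset (range_subset_range.2 hmn) fun i hin him =>
    hf i (not_lt.1 (mt mem_range.2 him)) (mem_range.1 hin)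

theorem Finset.sum_range_sum_range_eq_sum_range_diag {M : Type*} [AddCommMonoid M]
    (n : ℕ) {f : ℕ → ℕ → M} (hf : ∀ i j, n < i + j → f i j = 0) :
    ∑ i ∈ range (n + 1), ∑ j ∈ range (n + 1), f i j =
      ∑ m ∈ range (n + 1), ∑ i ∈ range (m + 1), f i (m - i) := by
  rw [sum_range_diag_flip]
  refine sum_congr rfl fun i _ => (sum_range_eq_sum_range_of_eq_zero (Nat.sub_le _ _) ?_).symm
  exact fun j hj _ => hf i j (by omega)

namespace Nat

theorem stirlingSecond_zero_right_of_ne_zero {n : ℕ} (hn : n ≠ 0) : stirlingSecond n 0 = 0 := by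
  obtain ⟨m, rfl⟩ := exists_eq_succ_of_ne_zero hn
  rfl

theorem sum_antidiagonal_choose_mul_stirlingSecond_zero_mul (n k : ℕ) :
    ∑ ij ∈ antidiagonal n, n.choose ij.1 * stirlingSecond ij.1 0 * stirlingSecond ij.2 k =
      stirlingSecond n k := by
  rw [sum_eq_single (0, n)]
  · simp
  · rintro ⟨i, j⟩ hij hne
    have hi : i ≠ 0 := by rintro rfl; simp_all
    rw [stirlingSecond_zero_right_of_ne_zero hi, mul_zero, zero_mul]
  · simp

theorem sum_antidiagonal_choose_mul_stirlingSecond_mul_zero (n l : ℕ) :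
    ∑ ij ∈ antidiagonal n, n.choose ij.1 * stirlingSecond ij.1 l * stirlingSecond ij.2 0 =
      stirlingSecond n l := by
  rw [sum_eq_single (n, 0)]
  · simp
  · rintro ⟨i, j⟩ hij hne
    have hj : j ≠ 0 := by rintro rfl; simp_all
    rw [stirlingSecond_zero_right_of_ne_zero hj, mul_zero]
  · simp

theorem sum_antidiagonal_choose_mul_stirlingSecond_mul_stirlingSecond (n l k : ℕ) :
    ∑ ij ∈ antidiagonal n, n.choose ij.1 * stirlingSecond ij.1 l * stirlingSecond ij.2 k =
      (l + k).choose l * stirlingSecond n (l + k) := by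
  induction n generalizing l k with
  | zero => rcases l with _ | l <;> rcases k with _ | k <;> simp [stirlingSecond_eq_zero_of_lt]
  | succ n ih =>
    rcases l with _ | l
    · simp [sum_antidiagonal_choose_mul_stirlingSecond_zero_mul]
    rcases k with _ | k
    · simp [sum_antidiagonal_choose_mul_stirlingSecond_mul_zero]
    have pascal := sum_antidiagonal_choose_succ_mul
      (fun i j => stirlingSecond i (l + 1) * stirlingSecond j (k + 1)) n
    simp only [Nat.cast_id, ← mul_assoc] at pascal
    have grow_right : ∑ ij ∈ antidiagonal n,
        n.choose ij.1 * stirlingSecond ij.1 (l + 1) * stirlingSecond (ij.2 + 1) (k + 1) =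
          (k + 1) * ((l + 1 + (k + 1)).choose (l + 1) * stirlingSecond n (l + 1 + (k + 1))) +
            (l + 1 + k).choose (l + 1) * stirlingSecond n (l + 1 + k) := by
      rw [← ih, ← ih, mul_sum, ← sum_add_distrib]
      refine sum_congr rfl fun ij _ => ?_
      rw [stirlingSecond_succ_succ]
      ring
    have grow_left : ∑ ij ∈ antidiagonal n,
        n.choose ij.2 * stirlingSecond (ij.1 + 1) (l + 1) * stirlingSecond ij.2 (k + 1) =
          (l + 1) * ((l + 1 + (k + 1)).choose (l + 1) * stirlingSecond n (l + 1 + (k + 1))) +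
            (l + (k + 1)).choose l * stirlingSecond n (l + (k + 1)) := by
      rw [← ih, ← ih, mul_sum, ← sum_add_distrib]
      refine sum_congr rfl fun ij hij => ?_
      rw [stirlingSecond_succ_succ, choose_symm_of_eq_add (mem_antidiagonal.1 hij).symm]
      ring
    rw [pascal, grow_right, grow_left, show l + 1 + (k + 1) = l + k + 1 + 1 by omega,
      show l + 1 + k = l + k + 1 by omega, show l + (k + 1) = l + k + 1 by omega,
      stirlingSecond_succ_succ, choose_succ_succ (l + k + 1) l]
    ring

theorem sum_range_choose_mul_stirlingSecond_mul_stirlingSecond (n l k : ℕ) :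
    ∑ m ∈ range (n + 1), n.choose m * stirlingSecond m l * stirlingSecond (n - m) k =
      (l + k).choose l * stirlingSecond n (l + k) := by
  rw [← sum_antidiagonal_choose_mul_stirlingSecond_mul_stirlingSecond,
    Finset.Nat.sum_antidiagonal_eq_sum_range_succ
      (fun i j => n.choose i * stirlingSecond i l * stirlingSecond j k)]

theorem sum_range_sum_range_sum_range_choose_mul_stirlingSecond {R : Type*} [CommSemiring R]
    (A B : ℕ → R) (n : ℕ) :
    ∑ m ∈ range (n + 1), ∑ ℓ ∈ range (m + 1), ∑ k ∈ range (n - m + 1),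
        (n.choose m : R) * A ℓ * B k * stirlingSecond m ℓ * stirlingSecond (n - m) k =
      ∑ ℓ ∈ range (n + 1), ∑ k ∈ range (n + 1),
        A ℓ * B k * ((ℓ + k).choose ℓ * stirlingSecond n (ℓ + k) : ℕ) := by
  have extend : ∀ m ∈ range (n + 1), ∑ ℓ ∈ range (m + 1), ∑ k ∈ range (n - m + 1),
        (n.choose m : R) * A ℓ * B k * stirlingSecond m ℓ * stirlingSecond (n - m) k =
      ∑ ℓ ∈ range (n + 1), ∑ k ∈ range (n + 1),
        (n.choose m : R) * A ℓ * B k * stirlingSecond m ℓ * stirlingSecond (n - m) k := by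
    intro m hm
    have hm := mem_range_succ_iff.1 hm
    rw [sum_range_eq_sum_range_of_eq_zero (show m + 1 ≤ n + 1 by omega) fun ℓ hℓ _ => by
      simp [stirlingSecond_eq_zero_of_lt (show m < ℓ by omega)]]
    refine sum_congr rfl fun ℓ _ =>
      sum_range_eq_sum_range_of_eq_zero (show n - m + 1 ≤ n + 1 by omega) fun k hk _ => ?_
    simp [stirlingSecond_eq_zero_of_lt (show n - m < k by omega)]
  rw [sum_congr rfl extend, sum_comm, sum_congr rfl fun ℓ _ => sum_comm]
  refine sum_congr rfl fun ℓ _ => sum_congr rfl fun k _ => ?_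
  rw [← sum_range_choose_mul_stirlingSecond_mul_stirlingSecond, Nat.cast_sum, mul_sum]
  refine sum_congr rfl fun m _ => ?_
  push_cast
  ring

end Nat

/-- One-dimensional case of the triple-sum rearrangement identity:
`∑_{m=0}^ν ∑_{ℓ=0}^m ∑_{k=0}^{ν-m} C(ν,m) A_ℓ B_k S(m,ℓ) S(ν-m,k)
  = ∑_{m=0}^ν (∑_{ℓ=0}^m C(m,ℓ) A_ℓ B_{m-ℓ}) S(ν,m)`. -/
theorem stirling2_triple_sum_rearrange (A B : ℕ → ℝ) (ν : ℕ) :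
    ∑ m ∈ Finset.range (ν + 1), ∑ ℓ ∈ Finset.range (m + 1),
      ∑ k ∈ Finset.range (ν - m + 1),
        (ν.choose m : ℝ) * A ℓ * B k * stirling2 m ℓ * stirling2 (ν - m) k
    = ∑ m ∈ Finset.range (ν + 1),
        (∑ ℓ ∈ Finset.range (m + 1), (m.choose ℓ : ℝ) * A ℓ * B (m - ℓ)) *
          stirling2 ν m := by
  rw [stirling2_eq_stirlingSecond, Nat.sum_range_sum_range_sum_range_choose_mul_stirlingSecond,
    sum_range_sum_range_eq_sum_range_diag]
  · refine sum_congr rfl fun m _ => ?_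
    rw [sum_mul]
    refine sum_congr rfl fun ℓ hℓ => ?_
    rw [Nat.add_sub_cancel' (mem_range_succ_iff.1 hℓ)]
    push_cast
    ring
  · intro ℓ k h
    simp [Nat.stirlingSecond_eq_zero_of_lt h]
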